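/- In ℝ^d with the Euclidean metric, let P be an n-tuple of nonempty closed sites with ε := min_{i≠j} dist(P_i, P_j) > 0, and let R, S satisfy R = Dom S and S = Dom R. If a ∈ R_i and p ∈ P_i is a nearest point of P_i to a, then the cone K := conv({a} ∪ B(p, ε/4)) is contained in R_i. -/

import Mathlib

/-! The cone lies in `dom {p} X`, where `X` is the union of the regions `S j`, `j ≠ i`: this set
is convex, being an intersection of half-spaces bounded by perpendicular bisectors; it contains `a`
because `p` is nearest to `a` in `P i`; and it contains `B(p, ε/4)` because the self-consistency
`S = Dom R` keeps every point of `S j` at distance at least `ε/2` from `p`. Finally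
`dom {p} X ⊆ dom (P i) X = R i`. -/

open EMetric Set

/-- The dominance region of `A` over `B`. -/
def dom {X : Type*} [MetricSpace X] (A B : Set X) : Set X :=
  {x | infEdist x A ≤ infEdist x B}

/-- The operator `Dom` relative to the tuple of sites `P`. -/
def Dom {X : Type*} [MetricSpace X] {n : ℕ} (P R : Fin n → Set X) : Fin n → Set X :=
  fun i => dom (P i) (⋃ j, ⋃ (_ : j ≠ i), R j)

section MetricSpace

variable {X : Type*} [MetricSpace X]

lemma mem_dom {A B : Set X} {x : X} :
    x ∈ dom A B ↔ Metric.infEDist x A ≤ Metric.infEDist x B :=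
  Iff.rfl

lemma subset_dom (A B : Set X) : A ⊆ dom A B := fun x hx => by
  simp [mem_dom, Metric.infEDist_zero_of_mem hx]

lemma mem_dom_singleton_iff {p x : X} {B : Set X} :
    x ∈ dom {p} B ↔ ∀ y ∈ B, dist x p ≤ dist x y := by
  simp only [mem_dom, Metric.infEDist_singleton, Metric.le_infEDist, edist_dist,
    ENNReal.ofReal_le_ofReal_iff dist_nonneg]

lemma dom_singleton_subset_dom {A : Set X} {p : X} (hp : p ∈ A) (B : Set X) :
    dom {p} B ⊆ dom A B := fun x hx => by
  rw [mem_dom, Metric.infEDist_singleton] at hx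
  exact mem_dom.2 ((Metric.infEDist_le_edist_of_mem hp).trans hx)

lemma mem_dom_singleton_of_dist_eq_infDist {A B : Set X} {a p : X} (ha : a ∈ dom A B)
    (hnear : dist a p = Metric.infDist a A) : a ∈ dom {p} B := by
  have h : edist a p ≤ Metric.infEDist a A := Metric.le_infEDist.2 fun q hq => by
    rw [edist_dist, edist_dist, hnear]
    exact ENNReal.ofReal_le_ofReal (Metric.infDist_le_dist_of_mem hq)
  rw [mem_dom, Metric.infEDist_singleton]
  exact h.trans ha

lemma le_two_mul_dist_of_mem_dom {A B : Set X} {y p : X} {ε : ℝ} (hy : y ∈ dom A B)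
    (hp : p ∈ B) (hA : ∀ q ∈ A, ε ≤ dist p q) : ε ≤ 2 * dist y p := by
  have hlow : ENNReal.ofReal (ε - dist y p) ≤ Metric.infEDist y A :=
    Metric.le_infEDist.2 fun q hq => by
      rw [edist_dist]
      refine ENNReal.ofReal_le_ofReal ?_
      linarith [hA q hq, dist_triangle_left p q y]
  have hup : Metric.infEDist y A ≤ ENNReal.ofReal (dist y p) :=
    (hy.trans (Metric.infEDist_le_edist_of_mem hp)).trans_eq (edist_dist y p)
  have := (ENNReal.ofReal_le_ofReal_iff dist_nonneg).1 (hlow.trans hup)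
  linarith

lemma closedBall_subset_dom_singleton {B : Set X} {p : X} {r : ℝ}
    (hB : ∀ y ∈ B, 2 * r ≤ dist y p) : Metric.closedBall p r ⊆ dom {p} B := fun x hx =>
  mem_dom_singleton_iff.2 fun y hy => by
    linarith [hB y hy, Metric.mem_closedBall.1 hx, dist_triangle_left y p x]

end MetricSpace

section InnerProductSpace

variable {E : Type*} [NormedAddCommGroup E] [InnerProductSpace ℝ E]

lemma convex_setOf_dist_le_dist (p y : E) : Convex ℝ {x : E | dist x p ≤ dist x y} := by
  have h : {x : E | dist x p ≤ dist x y}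
      = {x : E | inner ℝ (y - p) x ≤ (‖y‖ ^ 2 - ‖p‖ ^ 2) / 2} := by
    ext x
    simp only [mem_ofPred_eq, dist_eq_norm]
    rw [← pow_le_pow_iff_left₀ (norm_nonneg _) (norm_nonneg _) two_ne_zero,
      norm_sub_sq_real, norm_sub_sq_real, inner_sub_left, real_inner_comm x y,
      real_inner_comm x p]
    constructor <;> intro h <;> linarith
  rw [h]
  exact convex_halfSpace_le (innerSL ℝ (y - p)).toLinearMap.isLinear _

lemma convex_dom_singleton (p : E) (B : Set E) : Convex ℝ (dom {p} B) := by
  have h : dom {p} B = ⋂ y ∈ B, {x | dist x p ≤ dist x y} := by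
    ext x
    simp only [mem_dom_singleton_iff, mem_iInter, mem_ofPred_eq]
  rw [h]
  exact convex_iInter₂ fun y _ => convex_setOf_dist_le_dist p y

end InnerProductSpace

theorem cone_lemma_euclidean_general (d : ℕ) {n : ℕ}
    (P R S : Fin n → Set (EuclideanSpace ℝ (Fin d)))
    (ε : ℝ)
    (hsep : ∀ i j, i ≠ j → ∀ p ∈ P i, ∀ q ∈ P j, ε ≤ dist p q)
    (hR : R = Dom P S) (hS : S = Dom P R)
    (i : Fin n) (a : EuclideanSpace ℝ (Fin d)) (ha : a ∈ R i)
    (p : EuclideanSpace ℝ (Fin d)) (hp : p ∈ P i)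
    (hnear : dist a p = Metric.infDist a (P i)) :
    convexHull ℝ ({a} ∪ Metric.closedBall p (ε / 4)) ⊆ R i := by
  set X := ⋃ j, ⋃ (_ : j ≠ i), S j
  have hRi : R i = dom (P i) X := by rw [hR]; rfl
  have hpR : p ∈ R i := hRi ▸ subset_dom _ _ hp
  have hfar : ∀ y ∈ X, 2 * (ε / 4) ≤ dist y p := by
    intro y hy
    obtain ⟨j, hji, hyj⟩ := mem_iUnion₂.1 hy
    rw [hS] at hyj
    have := le_two_mul_dist_of_mem_dom hyj (mem_iUnion₂.2 ⟨i, hji.symm, hpR⟩)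
      (hsep i j hji.symm p hp)
    linarith
  have haD : a ∈ dom {p} X := mem_dom_singleton_of_dist_eq_infDist (hRi ▸ ha) hnear
  have hcone : {a} ∪ Metric.closedBall p (ε / 4) ⊆ dom {p} X :=
    union_subset (singleton_subset_iff.2 haD) (closedBall_subset_dom_singleton hfar)
  exact (convexHull_min hcone (convex_dom_singleton p X)).trans
    (hRi ▸ dom_singleton_subset_dom hp X)

/-- Cone lemma, Euclidean case: if `a ∈ R i` and `p ∈ P i` is a nearest point of
`P i` to `a`, then `conv({a} ∪ B(p, ε/4)) ⊆ R i`. -/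
theorem cone_lemma_euclidean (d : ℕ) {n : ℕ}
    (P R S : Fin n → Set (EuclideanSpace ℝ (Fin d)))
    (hPne : ∀ i, (P i).Nonempty) (hPcl : ∀ i, IsClosed (P i))
    (ε : ℝ) (hε : 0 < ε)
    (hsep : ∀ i j, i ≠ j → ∀ p ∈ P i, ∀ q ∈ P j, ε ≤ dist p q)
    (hR : R = Dom P S) (hS : S = Dom P R)
    (i : Fin n) (a : EuclideanSpace ℝ (Fin d)) (ha : a ∈ R i)
    (p : EuclideanSpace ℝ (Fin d)) (hp : p ∈ P i)
    (hnear : dist a p = Metric.infDist a (P i)) :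
    convexHull ℝ ({a} ∪ Metric.closedBall p (ε / 4)) ⊆ R i :=
  cone_lemma_euclidean_general d P R S ε hsep hR hS i a ha p hp hnear
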